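/- arXiv:2601.05188 — 6 statements merged into one kernel-verified Lean document; each statement's English description precedes it below -/
import Mathlib

section
/- Let L be a finite lattice and G ⊆ L \ {⊥} a building set. Then every join-irreducible element of L belongs to G; in particular, every atom of L belongs to G. -/
open scoped Classical

variable {L : Type*} [Lattice L] [BoundedOrder L] [Finite L]

/-- The join of a (finite) subset of `L`. -/
noncomputable def setJoin (S : Set L) : L := S.toFinite.toFinset.sup id

/-- The join of a subset of `L`, relative to a base point `a`. -/
noncomputable def joinFrom (a : L) (S : Set L) : L := a ⊔ setJoin S

/-- The `G`-factors of `F`: the maximal elements of `{g ∈ G | g ≤ F}`. -/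
def factors (G : Set L) (F : L) : Set L :=
  {g ∈ G | g ≤ F ∧ ∀ h ∈ G, h ≤ F → g ≤ h → g = h}

/-- `G` is a building set of the interval `[a, b]` of `L`: the join map
from the product of the intervals `[a, g]` over the `G`-factors `g` of `F`
to `[a, F]` is an order isomorphism, for every `F ∈ [a, b]`. -/
def IsBuildingIcc (a b : L) (G : Set L) : Prop :=
  G ⊆ Set.Icc a b ∧ a ∉ G ∧ ∀ F ∈ Set.Icc a b,
    ∃ e : (∀ g : factors G F, Set.Icc a (g : L)) ≃o Set.Icc a F,
      ∀ x, ((e x : L)) = joinFrom a (Set.range fun g => ((x g : L)))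

/-- `G` is a building set of the lattice `L`. -/
def IsBuilding (G : Set L) : Prop := IsBuildingIcc ⊥ ⊤ G

/-- `S` is a nested set of the built lattice `(L, G)`. -/
def IsNested (G S : Set L) : Prop :=
  S ⊆ G ∧ ∀ A ⊆ S, IsAntichain (· ≤ ·) A → 2 ≤ A.ncard → setJoin A ∉ G

/-- The building ideal generated by `g`. -/
def buildingIdeal (G : Set L) (g : L) : Set L := {F | g ∈ factors G F}

/-- Every join-irreducible element of a finite lattice belongs to any building set;
in particular, every atom does. -/
theorem building_contains_supIrred_and_atoms (G : Set L) (hG : IsBuilding G) :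
    (∀ g : L, SupIrred g → g ∈ G) ∧ (∀ a : L, IsAtom a → a ∈ G) := by
  have main : ∀ g : L, SupIrred g → g ∈ G := by
    intro g hg
    obtain ⟨hGsub, hbot, hiso⟩ := hG
    obtain ⟨e, he⟩ := hiso g (by simp)
    set x := e.symm ⟨g, by simp⟩ with hx
    have hex : ((e x : L)) = g := by rw [hx, e.apply_symm_apply]
    have hformula := he x
    rw [hex] at hformula
    -- g = ⊥ ⊔ setJoin S
    have hjoin : g = setJoin (Set.range fun h : factors G g => ((x h : L))) :=
      hformula.trans (by simp [joinFrom])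
    obtain ⟨i, hi, hid⟩ := hg.finset_sup_eq hjoin.symm
    rw [Set.Finite.mem_toFinset] at hi
    obtain ⟨h, hh⟩ := hi
    have hxh : ((x h : L)) ≤ (h : L) := (x h).2.2
    have hhg : (h : L) ≤ g := h.2.2.1
    have hxg : ((x h : L)) = g := hh.trans hid
    have : (h : L) = g := le_antisymm hhg (hxg.symm.trans_le hxh)
    have := h.2.1
    rwa [‹(h : L) = g›] at this
  refine ⟨main, fun a ha => main a ?_⟩
  constructor
  · intro hmin
    exact ha.1 (le_antisymm (hmin bot_le) bot_le)
  · intro b c hbc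
    by_contra hcon
    push_neg at hcon
    obtain ⟨hb, hc⟩ := hcon
    have hble : b ≤ a := hbc ▸ le_sup_left
    have hcle : c ≤ a := hbc ▸ le_sup_right
    have hb' : b = ⊥ := ha.2 b (lt_of_le_of_ne hble hb)
    have hc' : c = ⊥ := ha.2 c (lt_of_le_of_ne hcle hc)
    rw [hb', hc', sup_idem] at hbc
    exact ha.1 hbc.symm
end

section
/- Let (L, G) be a built lattice (L a finite lattice, G a building set of L). Let F ∈ L have G-factors F₁, …, F_k, giving the structural isomorphism ψ_F : ∏_{i} [⊥, F_i] ≅ [⊥, F]. For every H ≤ F, writing (H_i)_i = ψ_F⁻¹(H), the set of G-factors of H is the disjoint union over i of the sets of G-factors of H_i. -/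
open scoped Classical

variable {L : Type*} [Lattice L] [BoundedOrder L] [Finite L]

set_option linter.unusedSectionVars false
set_option linter.unusedVariables false

lemma le_setJoin' {S : Set L} {s : L} (hs : s ∈ S) : s ≤ setJoin S :=
  Finset.le_sup (f := id) (S.toFinite.mem_toFinset.mpr hs)

lemma setJoin_le' {S : Set L} {c : L} (h : ∀ s ∈ S, s ≤ c) : setJoin S ≤ c :=
  Finset.sup_le fun s hs => h s (S.toFinite.mem_toFinset.mp hs)

noncomputable def deltaT (G : Set L) (F : L) (g : factors G F) (y : L) (hy : y ≤ (g : L)) :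
    ∀ g' : factors G F, Set.Icc (⊥ : L) (g' : L) :=
  fun g' => if h : g' = g then ⟨y, bot_le, by rw [h]; exact hy⟩ else ⟨⊥, le_rfl, bot_le⟩

lemma e_deltaT (G : Set L) (F : L)
    (e : (∀ g : factors G F, Set.Icc (⊥ : L) (g : L)) ≃o Set.Icc (⊥ : L) F)
    (he : ∀ x, ((e x : L)) = joinFrom ⊥ (Set.range fun g => ((x g : L))))
    (g : factors G F) (y : L) (hy : y ≤ (g : L)) :
    ((e (deltaT G F g y hy) : L)) = y := by
  rw [he]
  unfold joinFrom
  rw [bot_sup_eq]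
  apply le_antisymm
  · apply setJoin_le'
    rintro s ⟨g', rfl⟩
    by_cases h : g' = g
    · simp [deltaT, h]
    · simp [deltaT, h]
  · exact le_setJoin' ⟨g, by simp [deltaT]⟩

lemma factor_unique (G : Set L) (F : L)
    (e : (∀ g : factors G F, Set.Icc (⊥ : L) (g : L)) ≃o Set.Icc (⊥ : L) F)
    (he : ∀ x, ((e x : L)) = joinFrom ⊥ (Set.range fun g => ((x g : L))))
    (hbot : (⊥ : L) ∉ G) (h : L) (hhG : h ∈ G)
    (g₁ g₂ : factors G F) (h1 : h ≤ (g₁ : L)) (h2 : h ≤ (g₂ : L)) : g₁ = g₂ := by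
  by_contra hne
  have e1 := e_deltaT G F e he g₁ h h1
  have e2 := e_deltaT G F e he g₂ h h2
  have heq : deltaT G F g₁ h h1 = deltaT G F g₂ h h2 := by
    apply e.injective
    apply Subtype.ext
    rw [e1, e2]
  have := congrFun heq g₁
  simp only [deltaT, dif_pos rfl, dif_neg hne] at this
  have : h = (⊥ : L) := congrArg Subtype.val this
  exact hbot (this ▸ hhG)

lemma exists_factor (G : Set L) (F : L) (h : L) (hhG : h ∈ G) (hhF : h ≤ F) :
    ∃ hg : h ≤ F, ∃ g ∈ factors G F, h ≤ g := by
  obtain ⟨g, hg, hmax⟩ := Set.Finite.exists_maximalFor id {g | g ∈ G ∧ h ≤ g ∧ g ≤ F}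
    (Set.toFinite _) ⟨h, hhG, le_rfl, hhF⟩
  exact ⟨hhF, g, ⟨hg.1, hg.2.2, fun h' hG' hF' hle => le_antisymm hle (hmax ⟨hG', hg.2.1.trans hle, hF'⟩ hle)⟩,
    hg.2.1⟩

lemma comp_le (G : Set L) (F : L)
    (e : (∀ g : factors G F, Set.Icc (⊥ : L) (g : L)) ≃o Set.Icc (⊥ : L) F)
    (he : ∀ x, ((e x : L)) = joinFrom ⊥ (Set.range fun g => ((x g : L))))
    (H : L) (hH : H ≤ F) (g : factors G F) :
    ((e.symm ⟨H, bot_le, hH⟩ g : L)) ≤ H := by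
  have h2 := he (e.symm ⟨H, bot_le, hH⟩)
  rw [e.apply_symm_apply] at h2
  have h3 : (e.symm ⟨H, bot_le, hH⟩ g : L) ≤
      setJoin (Set.range fun g' => ((e.symm ⟨H, bot_le, hH⟩ g' : L))) :=
    le_setJoin' ⟨g, rfl⟩
  calc (e.symm ⟨H, bot_le, hH⟩ g : L) ≤ _ := h3
    _ = joinFrom ⊥ _ := by simp [joinFrom]
    _ = H := h2.symm

lemma le_comp (G : Set L) (F : L)
    (e : (∀ g : factors G F, Set.Icc (⊥ : L) (g : L)) ≃o Set.Icc (⊥ : L) F)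
    (he : ∀ x, ((e x : L)) = joinFrom ⊥ (Set.range fun g => ((x g : L))))
    (H : L) (hH : H ≤ F) (g : factors G F) (y : L) (hyg : y ≤ (g : L)) (hyH : y ≤ H) :
    y ≤ (e.symm ⟨H, bot_le, hH⟩ g : L) := by
  have h1 := e_deltaT G F e he g y hyg
  have hle : e (deltaT G F g y hyg) ≤ ⟨H, bot_le, hH⟩ := by
    rw [← Subtype.coe_le_coe, h1]; exact hyH
  have h2 : deltaT G F g y hyg ≤ e.symm ⟨H, bot_le, hH⟩ := e.le_symm_apply.mpr hle
  have h3 : ((deltaT G F g y hyg g : L)) ≤ (e.symm ⟨H, bot_le, hH⟩ g : L) := h2 g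
  simpa [deltaT] using h3

/-- If `F` has `G`-factors giving the structural isomorphism `e`, then for `H ≤ F`,
writing `(H_i)_i = e.symm H`, the set of `G`-factors of `H` is the disjoint union over
the factors of `F` of the sets of `G`-factors of the components `H_i`. -/
theorem factors_union (G : Set L) (hG : IsBuilding G) (F : L)
    (e : (∀ g : factors G F, Set.Icc (⊥ : L) (g : L)) ≃o Set.Icc (⊥ : L) F)
    (he : ∀ x, ((e x : L)) = joinFrom ⊥ (Set.range fun g => ((x g : L))))
    (H : L) (hH : H ≤ F) :
    factors G H = (⋃ g : factors G F, factors G ((e.symm ⟨H, bot_le, hH⟩ g : L))) ∧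
    ∀ g₁ g₂ : factors G F, g₁ ≠ g₂ →
      Disjoint (factors G ((e.symm ⟨H, bot_le, hH⟩ g₁ : L)))
        (factors G ((e.symm ⟨H, bot_le, hH⟩ g₂ : L))) := by
  classical
  have hbotG : (⊥ : L) ∉ G := hG.2.1
  constructor
  · ext h
    simp only [Set.mem_iUnion]
    constructor
    · rintro ⟨hhG, hhH, hmax⟩
      obtain ⟨-, g, hgF, hhg⟩ := exists_factor G F h hhG (hhH.trans hH)
      refine ⟨⟨g, hgF⟩, hhG, le_comp G F e he H hH ⟨g, hgF⟩ h hhg hhH, ?_⟩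
      intro h' hh'G hh'le hle
      exact hmax h' hh'G (hh'le.trans (comp_le G F e he H hH ⟨g, hgF⟩)) hle
    · rintro ⟨g, hhG, hhle, hmax⟩
      have hcomp := comp_le G F e he H hH g
      refine ⟨hhG, hhle.trans hcomp, ?_⟩
      intro h' hh'G hh'H hle
      obtain ⟨-, g', hg'F, hh'g'⟩ := exists_factor G F h' hh'G (hh'H.trans hH)
      have hhg : h ≤ (g : L) := hhle.trans (e.symm ⟨H, bot_le, hH⟩ g).2.2
      have hgg' : g = ⟨g', hg'F⟩ :=
        factor_unique G F e he hbotG h hhG g ⟨g', hg'F⟩ hhg (hle.trans hh'g')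
      have : h' ≤ (e.symm ⟨H, bot_le, hH⟩ g : L) := by
        apply le_comp G F e he H hH g h' _ hh'H
        rw [hgg']; exact hh'g'
      exact hmax h' hh'G this hle
  · intro g₁ g₂ hne
    rw [Set.disjoint_left]
    rintro h ⟨hhG, hh1, -⟩ ⟨-, hh2, -⟩
    exact hne (factor_unique G F e he hbotG h hhG g₁ g₂
      (hh1.trans (e.symm ⟨H, bot_le, hH⟩ g₁).2.2)
      (hh2.trans (e.symm ⟨H, bot_le, hH⟩ g₂).2.2))
end

section
/- Let (L, G) be a built lattice and let F ∈ L \ {⊥}. Then the set G^F := G ∩ [⊥, F] is a building set of the lattice [⊥, F]. -/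
open scoped Classical

variable {L : Type*} [Lattice L] [BoundedOrder L] [Finite L]

/-- Restriction: for any `F ≠ ⊥`, the set `G ∩ [⊥, F]` is a building set of `[⊥, F]`. -/
theorem restriction_isBuilding (G : Set L) (hG : IsBuilding G) (F : L) (hF : F ≠ ⊥) :
    IsBuildingIcc ⊥ F (G ∩ Set.Icc ⊥ F) := by
  obtain ⟨hsub, hbot, hmain⟩ := hG
  refine ⟨fun g hg => hg.2, fun h => hbot h.1, ?_⟩
  intro F' hF'
  have hfac : factors (G ∩ Set.Icc ⊥ F) F' = factors G F' := by
    ext g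
    simp only [factors, Set.mem_inter_iff, Set.mem_Icc, Set.mem_setOf_eq]
    constructor
    · rintro ⟨⟨hg, _⟩, hle, hmax⟩
      exact ⟨hg, hle, fun h hh hhle hgh =>
        hmax h ⟨hh, bot_le, hhle.trans hF'.2⟩ hhle hgh⟩
    · rintro ⟨hg, hle, hmax⟩
      exact ⟨⟨hg, bot_le, hle.trans hF'.2⟩, hle,
        fun h hh hhle hgh => hmax h hh.1 hhle hgh⟩
  rw [hfac]
  exact hmain F' ⟨bot_le, le_top⟩
end

section
/- Let (L, G) be a built lattice with maximal elements G₁, …, G_k of G, and for each i let S_i ⊆ G ∩ [⊥, G_i]. Then the union ⋃_i S_i is a nested set of (L, G) if and only if each S_i is a nested set of ([⊥, G_i], G ∩ [⊥, G_i]). -/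
open scoped Classical

variable {L : Type*} [Lattice L] [BoundedOrder L] [Finite L]

/-- The maximal elements of a set `G`. -/
def maxElems (G : Set L) : Set L := {g ∈ G | ∀ h ∈ G, g ≤ h → g = h}

lemma le_setJoin {A : Set L} {a : L} (ha : a ∈ A) : a ≤ setJoin A := by
  have h : a ∈ A.toFinite.toFinset := by simpa using ha
  exact Finset.le_sup (f := id) h

lemma maxElems_mem_factors_top {G : Set L} {m : L} (hm : m ∈ maxElems G) :
    m ∈ factors G ⊤ :=
  ⟨hm.1, le_top, fun h hh _ hle => hm.2 h hh hle⟩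

lemma unique_max {G : Set L} (hG : IsBuilding G) {g m₁ m₂ : L}
    (hg : g ∈ G) (h1 : m₁ ∈ maxElems G) (h2 : m₂ ∈ maxElems G)
    (hg1 : g ≤ m₁) (hg2 : g ≤ m₂) : m₁ = m₂ := by
  by_contra hne
  obtain ⟨e, he⟩ := hG.2.2 ⊤ (by simp)
  have hm1 : m₁ ∈ factors G ⊤ := maxElems_mem_factors_top h1
  have hm2 : m₂ ∈ factors G ⊤ := maxElems_mem_factors_top h2
  set x : ∀ mm : factors G ⊤, Set.Icc (⊥ : L) (mm : L) :=
    fun mm => if h : (mm : L) = m₁ then ⟨g, bot_le, h ▸ hg1⟩ else ⟨⊥, le_refl _, bot_le⟩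
    with hx
  set y : ∀ mm : factors G ⊤, Set.Icc (⊥ : L) (mm : L) :=
    fun mm => if h : (mm : L) = m₂ then ⟨g, bot_le, h ▸ hg2⟩ else ⟨⊥, le_refl _, bot_le⟩
    with hy
  have hrange : (Set.range fun mm => ((x mm : L))) = (Set.range fun mm => ((y mm : L))) := by
    ext v
    constructor
    · rintro ⟨mm, rfl⟩
      by_cases h : (mm : L) = m₁
      · exact ⟨⟨m₂, hm2⟩, by simp [hx, hy, h, Ne.symm hne]⟩
      · exact ⟨⟨m₁, hm1⟩, by simp [hx, hy, h, hne]⟩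
    · rintro ⟨mm, rfl⟩
      by_cases h : (mm : L) = m₂
      · exact ⟨⟨m₁, hm1⟩, by simp [hx, hy, h, hne]⟩
      · exact ⟨⟨m₂, hm2⟩, by simp [hx, hy, h, Ne.symm hne]⟩
  have hval : (e x : L) = (e y : L) := by rw [he x, he y, joinFrom, joinFrom, hrange]
  have hxy : x = y := e.injective (Subtype.ext hval)
  have hcon := congrFun hxy ⟨m₁, hm1⟩
  simp [hx, hy, hne] at hcon
  exact hG.2.1 (Subtype.mk.inj hcon ▸ hg)

/-- A union of subsets `S_i ⊆ G ∩ [⊥, G_i]`, indexed by the maximal elements `G_i` of `G`,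
is a nested set of `(L, G)` if and only if each `S_i` is a nested set of the restricted
built lattice `([⊥, G_i], G ∩ [⊥, G_i])`. -/
theorem nested_iff_nested_restrictions (G : Set L) (hG : IsBuilding G)
    (S : maxElems G → Set L) (hS : ∀ g : maxElems G, S g ⊆ G ∩ Set.Icc ⊥ (g : L)) :
    IsNested G (⋃ g : maxElems G, S g) ↔
      ∀ g : maxElems G, IsNested (G ∩ Set.Icc ⊥ (g : L)) (S g) := by
  constructor
  · intro hN g
    refine ⟨hS g, ?_⟩
    intro A hA hanti hcard hmem
    exact hN.2 A (fun a ha => Set.mem_iUnion.2 ⟨g, hA ha⟩) hanti hcard hmem.1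
  · intro h
    constructor
    · intro a ha
      obtain ⟨g, hg⟩ := Set.mem_iUnion.1 ha
      exact (hS g hg).1
    · intro A hA hanti hcard hj
      have hne : ({h ∈ G | setJoin A ≤ h}).Nonempty := ⟨setJoin A, hj, le_refl _⟩
      obtain ⟨m, hm, hmax⟩ :=
        Set.Finite.exists_maximalFor id _ (Set.toFinite _) hne
      have hmmax : m ∈ maxElems G :=
        ⟨hm.1, fun k hk hle => le_antisymm hle (hmax (j := k) ⟨hk, le_trans hm.2 hle⟩ hle)⟩
      have hAS : A ⊆ S ⟨m, hmmax⟩ := by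
        intro a ha
        obtain ⟨g, hg⟩ := Set.mem_iUnion.1 (hA ha)
        have haG : a ∈ G := (hS g hg).1
        have ham : a ≤ m := le_trans (le_setJoin ha) hm.2
        have hag : a ≤ (g : L) := (hS g hg).2.2
        have hgm : (g : L) = m := unique_max hG haG g.2 hmmax hag ham
        have : g = (⟨m, hmmax⟩ : maxElems G) := Subtype.ext hgm
        exact this ▸ hg
      exact absurd ⟨hj, bot_le, hm.2⟩ ((h ⟨m, hmmax⟩).2 A hAS hanti hcard)
end

section
/- Let (L, G) be a built lattice and g ∈ G join-irreducible. Then the nested sets of (L, G) not containing g are exactly the nested sets of the built lattice (L \ (g), G \ {g}); i.e., the deletion of the vertex g from the nested set complex N(L, G) equals N(L \ (g), G \ {g}). -/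
open scoped Classical

variable {L : Type*} [Lattice L] [BoundedOrder L] [Finite L]

/-- The nested sets of `(L, G)` not containing a join-irreducible `g` are exactly the
nested sets of the built lattice `(L \ (g), G \ {g})` (whose joins agree with those of
`L`): the deletion of the vertex `g` from `N(L, G)` equals `N(L \ (g), G \ {g})`. -/
theorem deletion_nested_sets (G : Set L) (hG : IsBuilding G) (g : L) (hg : g ∈ G)
    (hirr : SupIrred g) (S : Set L) :
    (IsNested G S ∧ g ∉ S) ↔ IsNested (G \ {g}) S := by
  constructor
  · rintro ⟨⟨hSG, hN⟩, hgS⟩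
    refine ⟨fun x hx => ⟨hSG hx, fun hxg => hgS (hxg ▸ hx)⟩, fun A hAS hA hA2 hmem => ?_⟩
    exact hN A hAS hA hA2 hmem.1
  · rintro ⟨hSG, hN⟩
    have hgS : g ∉ S := fun h => (hSG h).2 rfl
    refine ⟨⟨fun x hx => (hSG hx).1, fun A hAS hA hA2 hmem => ?_⟩, hgS⟩
    by_cases hj : setJoin A = g
    · obtain ⟨i, hi, hig⟩ := hirr.finset_sup_eq hj
      simp only [id] at hig
      exact hgS (hAS (hig ▸ (A.toFinite.mem_toFinset.mp hi)))
    · exact hN A hAS hA hA2 ⟨hmem, hj⟩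
end

section
/- For every n ≥ 1, the descent counts of Stirling permutations are weakly increasing up to the middle: |Q_{n,0}| ≤ |Q_{n,1}| ≤ ⋯ ≤ |Q_{n,⌊n/2⌋}|, where Q_{n,k} is the set of Stirling permutations of {1,1,…,n,n} with exactly k descents. -/
/-- `π : ℕ → ℕ` encodes a Stirling permutation of the multiset `{1,1,2,2,…,n,n}`:
its first `2n` values use each of `1, …, n` exactly twice, every entry between the two
occurrences of a value is larger than that value, and `π` vanishes elsewhere. -/
def IsStirling (n : ℕ) (π : ℕ → ℕ) : Prop :=
  (∀ i, i < 2 * n → 1 ≤ π i ∧ π i ≤ n) ∧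
  (∀ i, 2 * n ≤ i → π i = 0) ∧
  (∀ k, 1 ≤ k → k ≤ n → ((Finset.range (2 * n)).filter (fun i => π i = k)).card = 2) ∧
  (∀ i l j, i < l → l < j → j < 2 * n → π i = π j → π i < π l)

/-- The number of descents of `π`. -/
def stirDes (n : ℕ) (π : ℕ → ℕ) : ℕ :=
  ((Finset.range (2 * n - 1)).filter (fun i => π (i + 1) < π i)).card

/-- `Q_{n,k}`: the Stirling permutations of `{1,1,…,n,n}` with exactly `k` descents. -/
def Qset (n k : ℕ) : Set (ℕ → ℕ) := {π | IsStirling n π ∧ stirDes n π = k}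


namespace StirAux

def insF (v p : ℕ) (σ : ℕ → ℕ) : ℕ → ℕ :=
  fun i => if i < p then σ i else if i < p + 2 then v else σ (i - 2)
lemma insF_lt {v p : ℕ} {σ : ℕ → ℕ} {i : ℕ} (h : i < p) : insF v p σ i = σ i := by
  simp [insF, h]
lemma insF_mid {v p : ℕ} {σ : ℕ → ℕ} {i : ℕ} (h1 : p ≤ i) (h2 : i < p + 2) :
    insF v p σ i = v := by
  simp [insF, Nat.not_lt.2 h1, h2]
lemma insF_ge {v p : ℕ} {σ : ℕ → ℕ} {i : ℕ} (h : p + 2 ≤ i) : insF v p σ i = σ (i - 2) := by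
  have h1 : ¬ i < p := by omega
  have h2 : ¬ i < p + 2 := by omega
  simp [insF, h1, h2]

lemma stirling_le {n : ℕ} {σ : ℕ → ℕ} (hσ : IsStirling n σ) (i : ℕ) : σ i ≤ n := by
  rcases lt_or_ge i (2*n) with h | h
  · exact (hσ.1 i h).2
  · rw [hσ.2.1 i h]; omega

lemma insF_le {n p : ℕ} {σ : ℕ → ℕ} (hσ : IsStirling n σ) (x : ℕ) :
    insF (n+1) p σ x ≤ n+1 := by
  rcases lt_or_ge x p with h | h
  · rw [insF_lt h]; exact le_trans (stirling_le hσ x) (by omega)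
  · rcases lt_or_ge x (p+2) with h2 | h2
    · rw [insF_mid h h2]
    · rw [insF_ge h2]; exact le_trans (stirling_le hσ _) (by omega)

lemma insF_val_iff {n p : ℕ} {σ : ℕ → ℕ} (hσ : IsStirling n σ) (x : ℕ) :
    insF (n+1) p σ x = n+1 ↔ (x = p ∨ x = p+1) := by
  constructor
  · intro h
    by_contra hc
    push_neg at hc
    rcases lt_or_ge x p with h1 | h1
    · rw [insF_lt h1] at h; have := stirling_le hσ x; omega
    · rcases lt_or_ge x (p+2) with h2 | h2
      · omega
      · rw [insF_ge h2] at h; have := stirling_le hσ (x-2); omega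
  · intro h
    have h1 : p ≤ x := by omega
    have h2 : x < p + 2 := by omega
    exact insF_mid h1 h2

lemma count_ins {n p v c : ℕ} {σ : ℕ → ℕ} (hp : p ≤ 2*n) (hc : c ≠ v) :
    ((Finset.range (2*n+2)).filter (fun i => insF v p σ i = c)).card
      = ((Finset.range (2*n)).filter (fun i => σ i = c)).card := by
  apply Finset.card_bij' (i := fun a _ => if a < p then a else a - 2)
    (j := fun b _ => if b < p then b else b + 2)
  · intro a ha
    simp only [Finset.mem_filter, Finset.mem_range] at ha ⊢
    rcases lt_or_ge a p with h1 | h1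
    · rw [insF_lt h1] at ha; simp [h1]; exact ⟨by omega, ha.2⟩
    · have h2 : p + 2 ≤ a := by
        by_contra hcon
        rw [insF_mid h1 (by omega)] at ha
        exact hc ha.2.symm
      rw [insF_ge h2] at ha
      have : ¬ a < p := by omega
      simp [this]
      exact ⟨by omega, ha.2⟩
  · intro b hb
    simp only [Finset.mem_filter, Finset.mem_range] at hb ⊢
    rcases lt_or_ge b p with h1 | h1
    · simp [h1]; rw [insF_lt h1]; exact ⟨by omega, hb.2⟩
    · have : ¬ b < p := by omega
      simp [this]
      rw [insF_ge (by omega)]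
      simp only [Nat.add_sub_cancel]
      exact ⟨by omega, hb.2⟩
  · intro a ha
    simp only [Finset.mem_filter, Finset.mem_range] at ha
    rcases lt_or_ge a p with h1 | h1
    · simp [h1]
    · have h2 : p + 2 ≤ a := by
        by_contra hcon
        rw [insF_mid h1 (by omega)] at ha
        exact hc ha.2.symm
      have e1 : ¬ a < p := by omega
      have e2 : ¬ a - 2 < p := by omega
      simp [e1, e2]
      omega
  · intro b hb
    rcases lt_or_ge b p with h1 | h1
    · simp [h1]
    · have e1 : ¬ b < p := by omega
      have e2 : ¬ b + 2 < p := by omega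
      simp [e1, e2]

lemma count_ins_v {n p : ℕ} {σ : ℕ → ℕ} (hσ : IsStirling n σ) (hp : p ≤ 2*n) :
    ((Finset.range (2*n+2)).filter (fun i => insF (n+1) p σ i = n+1)) = {p, p+1} := by
  ext x
  simp only [Finset.mem_filter, Finset.mem_range, Finset.mem_insert, Finset.mem_singleton]
  constructor
  · rintro ⟨hx, hv⟩
    exact (insF_val_iff hσ x).1 hv
  · intro h
    exact ⟨by omega, (insF_val_iff hσ x).2 h⟩

lemma ins_isStirling {n : ℕ} {σ : ℕ → ℕ} (hσ : IsStirling n σ) {p : ℕ} (hp : p ≤ 2*n) :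
    IsStirling (n+1) (insF (n+1) p σ) := by
  have h2 : 2*(n+1) = 2*n+2 := by ring
  refine ⟨?_, ?_, ?_, ?_⟩
  · intro i hi
    rw [h2] at hi
    rcases lt_or_ge i p with h1 | h1
    · rw [insF_lt h1]
      have := hσ.1 i (by omega)
      omega
    · rcases lt_or_ge i (p+2) with hm | hm
      · rw [insF_mid h1 hm]; omega
      · rw [insF_ge hm]
        have := hσ.1 (i-2) (by omega)
        omega
  · intro i hi
    rw [h2] at hi
    rw [insF_ge (by omega)]
    exact hσ.2.1 (i-2) (by omega)
  · intro c hc1 hc2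
    rw [h2]
    by_cases hcv : c = n+1
    · subst hcv
      rw [count_ins_v hσ hp]
      rw [Finset.card_insert_of_notMem (by simp), Finset.card_singleton]
    · rw [count_ins hp hcv]
      exact hσ.2.2.1 c hc1 (by omega)
  · intro i l j hil hlj hjn hij
    rw [h2] at hjn
    by_cases hiv : insF (n+1) p σ i = n+1
    · have hi' := (insF_val_iff hσ i).1 hiv
      have hj' := (insF_val_iff hσ j).1 (by rw [← hij]; exact hiv)
      omega
    · have hjv : ¬ insF (n+1) p σ j = n+1 := by rw [← hij]; exact hiv
      have hi2 : i < p ∨ p + 2 ≤ i := by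
        by_contra hcon; push_neg at hcon
        exact hiv ((insF_val_iff (p := p) hσ i).2 (by omega))
      have hj2 : j < p ∨ p + 2 ≤ j := by
        by_contra hcon; push_neg at hcon
        exact hjv ((insF_val_iff (p := p) hσ j).2 (by omega))
      by_cases hlv : insF (n+1) p σ l = n+1
      · rw [hlv]
        have hb := insF_le (p := p) hσ i
        omega
      · have hl2 : l < p ∨ p + 2 ≤ l := by
          by_contra hcon; push_neg at hcon
          exact hlv ((insF_val_iff (p := p) hσ l).2 (by omega))
        have key : ∀ x, x < p ∨ p + 2 ≤ x → insF (n+1) p σ x = σ (if x < p then x else x - 2) := by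
          intro x hx
          rcases hx with h | h
          · rw [insF_lt h, if_pos h]
          · rw [insF_ge h, if_neg (by omega)]
        rw [key i hi2, key l hl2]
        rw [key i hi2, key j hj2] at hij
        apply hσ.2.2.2 _ _ _ _ _ _ hij
        · split_ifs <;> omega
        · split_ifs <;> omega
        · split_ifs <;> omega

def presGaps (n : ℕ) (σ : ℕ → ℕ) : Finset ℕ :=
  (Finset.range (2*n+1)).filter (fun p => p = 2*n ∨ (0 < p ∧ σ p < σ (p-1)))
def incrGaps (n : ℕ) (σ : ℕ → ℕ) : Finset ℕ :=
  (Finset.range (2*n+1)).filter (fun p => ¬ (p = 2*n ∨ (0 < p ∧ σ p < σ (p-1))))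

lemma card_presGaps (n : ℕ) (σ : ℕ → ℕ) : (presGaps n σ).card = stirDes n σ + 1 := by
  have hni : (2*n) ∉ (((Finset.range (2*n-1)).filter (fun i => σ (i+1) < σ i)).image (· + 1)) := by
    simp only [Finset.mem_image, Finset.mem_filter, Finset.mem_range]
    rintro ⟨i, ⟨hi, _⟩, hie⟩; omega
  have hset : presGaps n σ
      = insert (2*n) (((Finset.range (2*n-1)).filter (fun i => σ (i+1) < σ i)).image (· + 1)) := by
    ext q
    simp only [presGaps, Finset.mem_filter, Finset.mem_range, Finset.mem_insert, Finset.mem_image]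
    constructor
    · rintro ⟨hq, hq2 | ⟨hpos, hdes⟩⟩
      · exact Or.inl hq2
      · by_cases hq2n : q = 2*n
        · exact Or.inl hq2n
        · refine Or.inr ⟨q - 1, ⟨by omega, ?_⟩, by omega⟩
          rw [Nat.sub_add_cancel hpos]; exact hdes
    · rintro (rfl | ⟨i, ⟨hi, hdes⟩, rfl⟩)
      · exact ⟨by omega, Or.inl rfl⟩
      · refine ⟨by omega, Or.inr ⟨by omega, ?_⟩⟩
        simpa using hdes
  rw [hset, Finset.card_insert_of_notMem hni,
    Finset.card_image_of_injective _ (add_left_injective 1)]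
  rfl

lemma card_incrGaps (n : ℕ) (σ : ℕ → ℕ) : (incrGaps n σ).card = 2*n - stirDes n σ := by
  have h := Finset.card_filter_add_card_filter_not
    (s := Finset.range (2*n+1)) (p := fun p => p = 2*n ∨ (0 < p ∧ σ p < σ (p-1)))
  have h1 : (presGaps n σ).card = stirDes n σ + 1 := card_presGaps n σ
  have h2 : stirDes n σ ≤ 2*n - 1 := by
    have := Finset.card_filter_le (Finset.range (2*n-1)) (fun i => σ (i+1) < σ i)
    simpa [stirDes] using this
  simp only [Finset.card_range] at h
  unfold presGaps at h1
  unfold incrGaps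
  omega

lemma stirDes_ins {n : ℕ} {σ : ℕ → ℕ} (hσ : IsStirling n σ) {p : ℕ} (hp : p ≤ 2*n) :
    stirDes (n+1) (insF (n+1) p σ)
      = stirDes n σ + (if p = 2*n ∨ (0 < p ∧ σ p < σ (p-1)) then 0 else 1) := by
  have h2e : 2*(n+1) - 1 = 2*n+1 := by omega
  unfold stirDes
  rw [h2e]
  by_cases hc : p = 2*n ∨ (0 < p ∧ σ p < σ (p-1))
  · rw [if_pos hc]
    set f : ℕ → ℕ := fun a => if a + 1 < p then a else if a + 1 = p then p + 1 else a + 2 with hf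
    have hinj : Set.InjOn f ↑((Finset.range (2*n-1)).filter (fun i => σ (i+1) < σ i)) := by
      intro a _ b _ hab
      simp only [hf] at hab
      split_ifs at hab <;> omega
    have himg : ((Finset.range (2*n+1)).filter
          (fun i => insF (n+1) p σ (i + 1) < insF (n+1) p σ i))
        = ((Finset.range (2*n-1)).filter (fun i => σ (i+1) < σ i)).image f := by
      ext b
      simp only [Finset.mem_filter, Finset.mem_range, Finset.mem_image]
      constructor
      · rintro ⟨hbr, hbd⟩
        rcases lt_or_ge b p with h1 | h1
        · rcases Nat.lt_or_ge (b+1) p with h1' | h1'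
          · refine ⟨b, ⟨⟨by omega, ?_⟩, by simp [hf, h1']⟩⟩
            rw [insF_lt h1', insF_lt h1] at hbd
            exact hbd
          · exfalso
            have hbe : b + 1 = p := by omega
            rw [insF_mid (by omega) (by omega), insF_lt h1] at hbd
            have := stirling_le hσ b
            omega
        · rcases Nat.lt_or_ge b (p+2) with h1' | h1'
          · -- b = p or p+1
            rcases (by omega : b = p ∨ b = p + 1) with rfl | rfl
            · exfalso
              rw [insF_mid (by omega) (by omega), insF_mid (by omega) (by omega)] at hbd
              omega
            · -- b = p+1 : corresponds to σ-descent at p-1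
              have hplt : p < 2*n := by omega
              have hcr : 0 < p ∧ σ p < σ (p-1) := by
                rcases hc with h | h
                · omega
                · exact h
              refine ⟨p - 1, ⟨⟨by omega, ?_⟩, ?_⟩⟩
              · have e1 : p - 1 + 1 = p := by omega
                rw [e1]
                exact hcr.2
              · simp only [hf]
                have e1 : ¬ (p - 1 + 1 < p) := by omega
                have e2 : p - 1 + 1 = p := by omega
                rw [if_neg e1, if_pos e2]
          · refine ⟨b - 2, ⟨⟨by omega, ?_⟩, ?_⟩⟩
            · rw [insF_ge (by omega : p + 2 ≤ b + 1), insF_ge h1'] at hbd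
              have e1 : b + 1 - 2 = b - 2 + 1 := by omega
              rw [e1] at hbd
              exact hbd
            · simp only [hf]
              have e1 : ¬ (b - 2 + 1 < p) := by omega
              have e2 : ¬ (b - 2 + 1 = p) := by omega
              rw [if_neg e1, if_neg e2]
              omega
      · rintro ⟨a, ⟨⟨har, had⟩, rfl⟩⟩
        simp only [hf]
        split_ifs with h1 h2'
        · refine ⟨by omega, ?_⟩
          rw [insF_lt (by omega : a + 1 < p), insF_lt (by omega : a < p)]
          exact had
        · refine ⟨by omega, ?_⟩
          rw [insF_ge (by omega : p + 2 ≤ p + 1 + 1), insF_mid (by omega) (by omega)]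
          have e1 : p + 1 + 1 - 2 = a + 1 := by omega
          rw [e1]
          have := stirling_le hσ (a+1)
          omega
        · refine ⟨by omega, ?_⟩
          rw [insF_ge (by omega : p + 2 ≤ a + 2 + 1), insF_ge (by omega : p + 2 ≤ a + 2)]
          have e1 : a + 2 + 1 - 2 = a + 1 := by omega
          have e2 : a + 2 - 2 = a := by omega
          rw [e1, e2]
          exact had
    rw [himg, Finset.card_image_of_injOn hinj]
    omega
  · rw [if_neg hc]
    push_neg at hc
    obtain ⟨hne, hasc⟩ := hc
    have hplt : p < 2*n := by omega
    set f : ℕ → ℕ := fun a => if a + 1 < p then a else a + 2 with hf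
    have hinj : Set.InjOn f ↑((Finset.range (2*n-1)).filter (fun i => σ (i+1) < σ i)) := by
      intro a _ b _ hab
      simp only [hf] at hab
      split_ifs at hab <;> omega
    have hnotmem : p + 1 ∉ ((Finset.range (2*n-1)).filter (fun i => σ (i+1) < σ i)).image f := by
      simp only [Finset.mem_image, Finset.mem_filter, Finset.mem_range, hf]
      rintro ⟨a, ⟨har, had⟩, hae⟩
      split_ifs at hae with h1
      · omega
      · -- a + 2 = p + 1, so a = p - 1 and p ≥ 1, contradicting no descent at p-1
        have hpe : 0 < p ∧ a = p - 1 := by omega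
        have := hasc hpe.1
        have e1 : p - 1 + 1 = p := by omega
        rw [hpe.2, e1] at had
        omega
    have himg : ((Finset.range (2*n+1)).filter
          (fun i => insF (n+1) p σ (i + 1) < insF (n+1) p σ i))
        = insert (p+1) (((Finset.range (2*n-1)).filter (fun i => σ (i+1) < σ i)).image f) := by
      ext b
      simp only [Finset.mem_filter, Finset.mem_range, Finset.mem_image, Finset.mem_insert]
      constructor
      · rintro ⟨hbr, hbd⟩
        rcases lt_or_ge b p with h1 | h1
        · rcases Nat.lt_or_ge (b+1) p with h1' | h1'
          · refine Or.inr ⟨b, ⟨⟨by omega, ?_⟩, by simp [hf, h1']⟩⟩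
            rw [insF_lt h1', insF_lt h1] at hbd
            exact hbd
          · exfalso
            rw [insF_mid (by omega) (by omega), insF_lt h1] at hbd
            have := stirling_le hσ b
            omega
        · rcases Nat.lt_or_ge b (p+2) with h1' | h1'
          · rcases (by omega : b = p ∨ b = p + 1) with rfl | rfl
            · exfalso
              rw [insF_mid (by omega) (by omega), insF_mid (by omega) (by omega)] at hbd
              omega
            · exact Or.inl rfl
          · refine Or.inr ⟨b - 2, ⟨⟨by omega, ?_⟩, ?_⟩⟩
            · rw [insF_ge (by omega : p + 2 ≤ b + 1), insF_ge h1'] at hbd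
              have e1 : b + 1 - 2 = b - 2 + 1 := by omega
              rw [e1] at hbd
              exact hbd
            · simp only [hf]
              rw [if_neg (by omega)]
              omega
      · rintro (rfl | ⟨a, ⟨⟨har, had⟩, rfl⟩⟩)
        · refine ⟨by omega, ?_⟩
          rw [insF_ge (by omega : p + 2 ≤ p + 1 + 1), insF_mid (by omega) (by omega)]
          have e1 : p + 1 + 1 - 2 = p := by omega
          rw [e1]
          have := stirling_le hσ p
          omega
        · simp only [hf]
          split_ifs with h1
          · refine ⟨by omega, ?_⟩
            rw [insF_lt (by omega : a + 1 < p), insF_lt (by omega : a < p)]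
            exact had
          · -- a + 1 ≥ p; a ≠ p - 1 (no σ-descent there), so a ≥ p
            have hap : p ≤ a := by
              rcases Nat.lt_or_ge a p with h' | h'
              · exfalso
                have hpe : 0 < p ∧ a = p - 1 := by omega
                have := hasc hpe.1
                have e1 : p - 1 + 1 = p := by omega
                rw [hpe.2, e1] at had
                omega
              · exact h'
            refine ⟨by omega, ?_⟩
            rw [insF_ge (by omega : p + 2 ≤ a + 2 + 1), insF_ge (by omega : p + 2 ≤ a + 2)]
            have e1 : a + 2 + 1 - 2 = a + 1 := by omega
            have e2 : a + 2 - 2 = a := by omega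
            rw [e1, e2]
            exact had
    rw [himg, Finset.card_insert_of_notMem hnotmem, Finset.card_image_of_injOn hinj]

lemma ins_inj {n : ℕ} {σ σ' : ℕ → ℕ} (hσ : IsStirling n σ) (hσ' : IsStirling n σ')
    {p p' : ℕ} (hp : p ≤ 2*n) (hp' : p' ≤ 2*n)
    (h : insF (n+1) p σ = insF (n+1) p' σ') : p = p' ∧ σ = σ' := by
  have hpp : p = p' := by
    by_contra hne
    rcases Nat.lt_or_ge p p' with hlt | hge
    · have h1 := congrFun h p
      rw [insF_mid (le_refl p) (by omega), insF_lt hlt] at h1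
      have := stirling_le hσ' p
      omega
    · have hlt : p' < p := by omega
      have h1 := congrFun h p'
      rw [insF_lt hlt, insF_mid (le_refl p') (by omega)] at h1
      have := stirling_le hσ p'
      omega
  subst hpp
  refine ⟨rfl, funext fun i => ?_⟩
  rcases Nat.lt_or_ge i p with hlt | hge
  · have h1 := congrFun h i
    rwa [insF_lt hlt, insF_lt hlt] at h1
  · have h1 := congrFun h (i+2)
    rw [insF_ge (by omega), insF_ge (by omega)] at h1
    simpa using h1

lemma exists_decomp {n : ℕ} {π : ℕ → ℕ} (hπ : IsStirling (n+1) π) :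
    ∃ σ p, IsStirling n σ ∧ p ≤ 2*n ∧ π = insF (n+1) p σ := by
  have h2 : 2*(n+1) = 2*n+2 := by ring
  have hcard : ((Finset.range (2*n+2)).filter (fun i => π i = n+1)).card = 2 := by
    have := hπ.2.2.1 (n+1) (by omega) (le_refl _)
    rwa [h2] at this
  rw [Finset.card_eq_two] at hcard
  obtain ⟨a, b, hab, hset⟩ := hcard
  -- wlog a < b
  obtain ⟨p, q, hpq, hset⟩ : ∃ p q, p < q ∧
      ((Finset.range (2*n+2)).filter (fun i => π i = n+1)) = {p, q} := by
    rcases Nat.lt_or_ge a b with h' | h'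
    · exact ⟨a, b, h', hset⟩
    · exact ⟨b, a, by omega, by rw [hset, Finset.pair_comm]⟩
  have hmem : ∀ x, x ∈ (Finset.range (2*n+2)).filter (fun i => π i = n+1) ↔ (x = p ∨ x = q) := by
    intro x
    rw [hset]
    simp
  have hπp : π p = n+1 := by
    have := (hmem p).2 (Or.inl rfl)
    simp only [Finset.mem_filter] at this
    exact this.2
  have hπq : π q = n+1 := by
    have := (hmem q).2 (Or.inr rfl)
    simp only [Finset.mem_filter] at this
    exact this.2
  have hqlt : q < 2*n+2 := by
    have := (hmem q).2 (Or.inr rfl)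
    simp only [Finset.mem_filter, Finset.mem_range] at this
    exact this.1
  have hval : ∀ x, π x = n+1 → (x = p ∨ x = q) := by
    intro x hx
    rcases Nat.lt_or_ge x (2*n+2) with h' | h'
    · exact (hmem x).1 (by simp [Finset.mem_filter, Finset.mem_range, h', hx])
    · exfalso
      have := hπ.2.1 x (by omega)
      omega
  have hπle : ∀ x, x < 2*n+2 → π x ≤ n+1 := by
    intro x hx
    exact (hπ.1 x (by omega)).2
  have hq : q = p + 1 := by
    by_contra hne
    have hlt : p + 1 < q := by omega
    have := hπ.2.2.2 p (p+1) q (by omega) hlt (by omega) (by rw [hπp, hπq])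
    rw [hπp] at this
    have := hπle (p+1) (by omega)
    omega
  subst hq
  have hp2 : p ≤ 2*n := by omega
  set σ : ℕ → ℕ := fun i => if i < p then π i else π (i+2) with hσdef
  have hσlt : ∀ x, x < p → σ x = π x := by
    intro x hx
    simp [hσdef, hx]
  have hσge : ∀ x, p ≤ x → σ x = π (x+2) := by
    intro x hx
    simp [hσdef, Nat.not_lt.2 hx]
  have hπeq : π = insF (n+1) p σ := by
    funext i
    rcases Nat.lt_or_ge i p with h' | h'
    · rw [insF_lt h', hσlt i h']
    · rcases Nat.lt_or_ge i (p+2) with h'' | h''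
      · rw [insF_mid h' h'']
        rcases (by omega : i = p ∨ i = p + 1) with rfl | rfl
        · exact hπp
        · exact hπq
      · rw [insF_ge h'', hσge (i-2) (by omega)]
        congr 1
        omega
  have hσval : ∀ x, σ x ≠ n + 1 := by
    intro x hx
    rcases Nat.lt_or_ge x p with h' | h'
    · rw [hσlt x h'] at hx
      rcases hval x hx with rfl | rfl <;> omega
    · rw [hσge x h'] at hx
      rcases hval (x+2) hx with h'' | h'' <;> omega
  refine ⟨σ, p, ⟨?_, ?_, ?_, ?_⟩, hp2, hπeq⟩
  · intro i hi
    rcases Nat.lt_or_ge i p with h' | h'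
    · rw [hσlt i h']
      have hb := hπ.1 i (by omega)
      have hne : π i ≠ n + 1 := by
        have := hσval i
        rwa [hσlt i h'] at this
      omega
    · rw [hσge i h']
      have hb := hπ.1 (i+2) (by omega)
      have hne : π (i+2) ≠ n + 1 := by
        have := hσval i
        rwa [hσge i h'] at this
      omega
  · intro i hi
    rw [hσge i (by omega)]
    exact hπ.2.1 (i+2) (by omega)
  · intro c hc1 hc2
    have := hπ.2.2.1 c hc1 (by omega)
    rw [h2, hπeq] at this
    rw [← count_ins (σ := σ) hp2 (by omega : c ≠ n+1)]
    exact this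
  · intro i l j hil hlj hjn hij
    have key : ∀ x, σ x = π (if x < p then x else x + 2) := by
      intro x
      split_ifs with h'
      · exact hσlt x h'
      · exact hσge x (by omega)
    simp only [key] at hij ⊢
    apply hπ.2.2.2 _ _ _ _ _ _ hij
    · split_ifs <;> omega
    · split_ifs <;> omega
    · rw [h2]; split_ifs <;> omega

lemma qset_finite (n k : ℕ) : (Qset n k).Finite := by
  have hinj : Set.InjOn
      (fun (π : ℕ → ℕ) => fun i : Fin (2*n) => (⟨min (π i.val) n, by omega⟩ : Fin (n+1)))
      (Qset n k) := by
    intro π1 h1 π2 h2 he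
    funext x
    rcases Nat.lt_or_ge x (2*n) with hx | hx
    · have := congrFun he ⟨x, hx⟩
      simp only [Fin.mk.injEq] at this
      have b1 := (h1.1.1 x hx).2
      have b2 := (h2.1.1 x hx).2
      omega
    · rw [h1.1.2.1 x hx, h2.1.2.1 x hx]
  exact Set.Finite.of_finite_image (Set.Finite.subset Set.finite_univ (Set.subset_univ _)) hinj

instance qset_finite' (n k : ℕ) : Finite ↥(Qset n k) := (qset_finite n k).to_subtype

lemma mem_presGaps {n : ℕ} {σ : ℕ → ℕ} {p : ℕ} : p ∈ presGaps n σ ↔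
    (p ≤ 2*n ∧ (p = 2*n ∨ (0 < p ∧ σ p < σ (p-1)))) := by
  simp only [presGaps, Finset.mem_filter, Finset.mem_range]
  constructor
  · rintro ⟨h1, h2⟩; exact ⟨by omega, h2⟩
  · rintro ⟨h1, h2⟩; exact ⟨by omega, h2⟩

lemma mem_incrGaps {n : ℕ} {σ : ℕ → ℕ} {p : ℕ} : p ∈ incrGaps n σ ↔
    (p ≤ 2*n ∧ ¬ (p = 2*n ∨ (0 < p ∧ σ p < σ (p-1)))) := by
  simp only [incrGaps, Finset.mem_filter, Finset.mem_range]
  constructor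
  · rintro ⟨h1, h2⟩; exact ⟨by omega, h2⟩
  · rintro ⟨h1, h2⟩; exact ⟨by omega, h2⟩

lemma mem_presGaps_le {n : ℕ} {σ : ℕ → ℕ} {p : ℕ} (h : p ∈ presGaps n σ) : p ≤ 2*n :=
  (mem_presGaps.1 h).1

lemma mem_incrGaps_le {n : ℕ} {σ : ℕ → ℕ} {p : ℕ} (h : p ∈ incrGaps n σ) : p ≤ 2*n :=
  (mem_incrGaps.1 h).1

lemma qcard_succ (n k : ℕ) :
    (Qset (n+1) (k+1)).ncard = (k+2) * (Qset n (k+1)).ncard + (2*n-k) * (Qset n k).ncard := by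
  classical
  -- cardinalities of the pres/incr gap sets
  have hcardP : ∀ σ : ↥(Qset n (k+1)), (presGaps n σ.val).card = k+2 := by
    intro σ
    rw [card_presGaps, σ.prop.2]
  have hcardI : ∀ σ : ↥(Qset n k), (incrGaps n σ.val).card = 2*n-k := by
    intro σ
    rw [card_incrGaps, σ.prop.2]
  set X := (↥(Qset n (k+1)) × Fin (k+2)) ⊕ (↥(Qset n k) × Fin (2*n-k)) with hX
  have FP : ∀ (σ : ↥(Qset n (k+1))) (j : Fin (k+2)),
      insF (n+1) ((presGaps n σ.val).orderEmbOfFin (hcardP σ) j) σ.val ∈ Qset (n+1) (k+1) := by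
    intro σ j
    have hmem : (presGaps n σ.val).orderEmbOfFin (hcardP σ) j ∈ presGaps n σ.val :=
      Finset.orderEmbOfFin_mem _ _ _
    have hle := mem_presGaps_le hmem
    refine ⟨ins_isStirling σ.prop.1 hle, ?_⟩
    rw [stirDes_ins σ.prop.1 hle]
    rw [if_pos (mem_presGaps.1 hmem).2, σ.prop.2]
  have FI : ∀ (σ : ↥(Qset n k)) (j : Fin (2*n-k)),
      insF (n+1) ((incrGaps n σ.val).orderEmbOfFin (hcardI σ) j) σ.val ∈ Qset (n+1) (k+1) := by
    intro σ j
    have hmem : (incrGaps n σ.val).orderEmbOfFin (hcardI σ) j ∈ incrGaps n σ.val :=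
      Finset.orderEmbOfFin_mem _ _ _
    have hle := mem_incrGaps_le hmem
    refine ⟨ins_isStirling σ.prop.1 hle, ?_⟩
    rw [stirDes_ins σ.prop.1 hle]
    rw [if_neg (mem_incrGaps.1 hmem).2, σ.prop.2]
  set F : X → ↥(Qset (n+1) (k+1)) := fun x =>
    match x with
    | Sum.inl (σ, j) => ⟨_, FP σ j⟩
    | Sum.inr (σ, j) => ⟨_, FI σ j⟩
    with hF
  have hbij : Function.Bijective F := by
    constructor
    · rintro (⟨σ1, j1⟩ | ⟨σ1, j1⟩) (⟨σ2, j2⟩ | ⟨σ2, j2⟩) he <;>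
        simp only [hF, Subtype.mk_eq_mk] at he
      · have hm1 := Finset.orderEmbOfFin_mem (presGaps n σ1.val) (hcardP σ1) j1
        have hm2 := Finset.orderEmbOfFin_mem (presGaps n σ2.val) (hcardP σ2) j2
        obtain ⟨hpe, hσe⟩ := ins_inj σ1.prop.1 σ2.prop.1
          (mem_presGaps_le hm1) (mem_presGaps_le hm2) he
        have hσe' : σ1 = σ2 := Subtype.ext hσe
        subst hσe'
        congr
        exact (Finset.orderEmbOfFin _ _).injective hpe
      · have hm1 := Finset.orderEmbOfFin_mem (presGaps n σ1.val) (hcardP σ1) j1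
        have hm2 := Finset.orderEmbOfFin_mem (incrGaps n σ2.val) (hcardI σ2) j2
        obtain ⟨hpe, hσe⟩ := ins_inj σ1.prop.1 σ2.prop.1
          (mem_presGaps_le hm1) (mem_incrGaps_le hm2) he
        exfalso
        rw [hpe, hσe] at hm1
        exact (mem_incrGaps.1 hm2).2 (mem_presGaps.1 hm1).2
      · have hm1 := Finset.orderEmbOfFin_mem (incrGaps n σ1.val) (hcardI σ1) j1
        have hm2 := Finset.orderEmbOfFin_mem (presGaps n σ2.val) (hcardP σ2) j2
        obtain ⟨hpe, hσe⟩ := ins_inj σ1.prop.1 σ2.prop.1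
          (mem_incrGaps_le hm1) (mem_presGaps_le hm2) he
        exfalso
        rw [hpe, hσe] at hm1
        exact (mem_incrGaps.1 hm1).2 (mem_presGaps.1 hm2).2
      · have hm1 := Finset.orderEmbOfFin_mem (incrGaps n σ1.val) (hcardI σ1) j1
        have hm2 := Finset.orderEmbOfFin_mem (incrGaps n σ2.val) (hcardI σ2) j2
        obtain ⟨hpe, hσe⟩ := ins_inj σ1.prop.1 σ2.prop.1
          (mem_incrGaps_le hm1) (mem_incrGaps_le hm2) he
        have hσe' : σ1 = σ2 := Subtype.ext hσe
        subst hσe'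
        congr
        exact (Finset.orderEmbOfFin _ _).injective hpe
    · rintro ⟨π, hπ⟩
      obtain ⟨σ, p, hσ, hple, hπeq⟩ := exists_decomp hπ.1
      have hdes := hπ.2
      rw [hπeq, stirDes_ins hσ hple] at hdes
      by_cases hcond : p = 2*n ∨ (0 < p ∧ σ p < σ (p-1))
      · rw [if_pos hcond] at hdes
        have hσQ : σ ∈ Qset n (k+1) := ⟨hσ, by omega⟩
        have hpmem : p ∈ presGaps n σ := mem_presGaps.2 ⟨hple, hcond⟩
        have := Finset.range_orderEmbOfFin (presGaps n σ) (hcardP ⟨σ, hσQ⟩)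
        have hpr : p ∈ Set.range ((presGaps n σ).orderEmbOfFin (hcardP ⟨σ, hσQ⟩)) := by
          rw [this]; exact hpmem
        obtain ⟨j, hj⟩ := hpr
        refine ⟨Sum.inl (⟨σ, hσQ⟩, j), ?_⟩
        simp only [hF]
        apply Subtype.ext
        simp only
        rw [hj, ← hπeq]
      · rw [if_neg hcond] at hdes
        have hσQ : σ ∈ Qset n k := ⟨hσ, by omega⟩
        have hpmem : p ∈ incrGaps n σ := mem_incrGaps.2 ⟨hple, hcond⟩
        have := Finset.range_orderEmbOfFin (incrGaps n σ) (hcardI ⟨σ, hσQ⟩)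
        have hpr : p ∈ Set.range ((incrGaps n σ).orderEmbOfFin (hcardI ⟨σ, hσQ⟩)) := by
          rw [this]; exact hpmem
        obtain ⟨j, hj⟩ := hpr
        refine ⟨Sum.inr (⟨σ, hσQ⟩, j), ?_⟩
        simp only [hF]
        apply Subtype.ext
        simp only
        rw [hj, ← hπeq]
  have hcard := Nat.card_eq_of_bijective F hbij
  rw [hX] at hcard
  rw [Nat.card_sum, Nat.card_prod, Nat.card_prod, Nat.card_eq_fintype_card (α := Fin (k+2)),
    Nat.card_eq_fintype_card (α := Fin (2*n-k)), Fintype.card_fin, Fintype.card_fin,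
    Nat.card_coe_set_eq, Nat.card_coe_set_eq, Nat.card_coe_set_eq] at hcard
  rw [← hcard]
  ring

lemma qcard_zero (n : ℕ) : (Qset (n+1) 0).ncard = (Qset n 0).ncard := by
  have himg : Qset (n+1) 0 = (insF (n+1) (2*n)) '' (Qset n 0) := by
    ext π
    constructor
    · intro hπ
      obtain ⟨σ, p, hσ, hple, hπeq⟩ := exists_decomp hπ.1
      have hdes := hπ.2
      rw [hπeq, stirDes_ins hσ hple] at hdes
      by_cases hcond : p = 2*n ∨ (0 < p ∧ σ p < σ (p-1))
      · rw [if_pos hcond] at hdes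
        have hp2n : p = 2*n := by
          have h1 : p ∈ presGaps n σ := mem_presGaps.2 ⟨hple, hcond⟩
          have h2 : 2*n ∈ presGaps n σ := mem_presGaps.2 ⟨le_refl _, Or.inl rfl⟩
          have h3 : (presGaps n σ).card = 1 := by
            rw [card_presGaps]; omega
          exact Finset.card_le_one.1 (by omega) p h1 (2*n) h2
        exact ⟨σ, ⟨hσ, by omega⟩, by rw [← hp2n, ← hπeq]⟩
      · rw [if_neg hcond] at hdes
        omega
    · rintro ⟨σ, hσ, rfl⟩
      refine ⟨ins_isStirling hσ.1 (le_refl _), ?_⟩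
      rw [stirDes_ins hσ.1 (le_refl _), if_pos (Or.inl rfl), hσ.2]
  have hinj : Set.InjOn (insF (n+1) (2*n)) (Qset n 0) := by
    intro σ1 h1 σ2 h2 he
    exact (ins_inj h1.1 h2.1 (le_refl _) (le_refl _) he).2
  rw [himg, Set.ncard_image_of_injOn hinj]

lemma qcard_base0 : (Qset 0 0).ncard = 1 := by
  have : Qset 0 0 = {fun _ => 0} := by
    ext π
    constructor
    · intro hπ
      have h := hπ.1.2.1
      simp only [Set.mem_singleton_iff]
      funext i
      exact h i (by omega)
    · rintro rfl
      refine ⟨⟨fun i hi => by omega, fun i _ => rfl, fun c hc1 hc2 => by omega,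
        fun i l j hil hlj hjn hij => by omega⟩, ?_⟩
      simp [stirDes]
  rw [this, Set.ncard_singleton]

lemma qcard_base (k : ℕ) : (Qset 0 (k+1)).ncard = 0 := by
  have : Qset 0 (k+1) = ∅ := by
    ext π
    simp only [Set.mem_empty_iff_false, iff_false]
    intro hπ
    have := hπ.2
    simp [stirDes] at this
  rw [this, Set.ncard_empty]

/-- second-order Eulerian numbers -/
def E : ℕ → ℕ → ℕ
  | 0, 0 => 1
  | 0, _+1 => 0
  | n+1, 0 => E n 0
  | n+1, k+1 => (k+2) * E n (k+1) + (2*n - k) * E n k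

lemma card_E (n k : ℕ) : (Qset n k).ncard = E n k := by
  induction n generalizing k with
  | zero =>
    cases k with
    | zero => rw [qcard_base0]; rfl
    | succ k => rw [qcard_base]; rfl
  | succ n ih =>
    cases k with
    | zero => rw [qcard_zero, ih]; rfl
    | succ k => rw [qcard_succ, ih, ih]; rfl

lemma E_zero (n : ℕ) : E n 0 = 1 := by
  induction n with
  | zero => rfl
  | succ n ih => rw [show E (n+1) 0 = E n 0 from rfl, ih]

lemma phi_nonneg (N K : ℤ) (hN : 0 ≤ N) (hK : 0 ≤ K) (h : 6*K + 12 ≤ 4*N) :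
    0 ≤ 24*N^2 - 150*N + 234 + 260*K - 80*N*K + 70*K^2 := by
  by_cases h4 : 4 ≤ N
  · nlinarith [sq_nonneg (70*K - 40*N + 130), mul_nonneg (by linarith : (0:ℤ) ≤ N - 4) hN]
  · have hN3 : N = 3 := by omega
    have hK0 : K = 0 := by omega
    subst hN3; subst hK0; norm_num

lemma inv_lemma (n k : ℕ) : 4*n*(E n k) ≤ (k+2)*(E n (k+1)) + (6*k+9)*(E n k) := by
  induction n generalizing k with
  | zero =>
    cases k with
    | zero => simp
    | succ k => simp [show E 0 (k+1) = 0 from rfl]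
  | succ n ih =>
    cases k with
    | zero =>
      have e1 : E (n+1) 0 = 1 := E_zero (n+1)
      have e2 : E (n+1) 1 = 2 * E n 1 + 2*n := by
        rw [show E (n+1) 1 = (0+2) * E n (0+1) + (2*n - 0) * E n 0 from rfl, E_zero]
        ring_nf
        omega
      rw [e1, e2]
      omega
    | succ k =>
      show 4*(n+1)*(E (n+1) (k+1)) ≤ (k+3)*(E (n+1) (k+2)) + (6*(k+1)+9)*(E (n+1) (k+1))
      have e1 : E (n+1) (k+1) = (k+2) * E n (k+1) + (2*n - k) * E n k := rfl
      have e2 : E (n+1) (k+2) = (k+3) * E n (k+2) + (2*n - (k+1)) * E n (k+1) := rfl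
      by_cases hcase : 4*(n+1) ≤ 6*(k+1)+9
      · calc 4*(n+1)*(E (n+1) (k+1)) ≤ (6*(k+1)+9)*(E (n+1) (k+1)) :=
              Nat.mul_le_mul_right _ hcase
          _ ≤ (k+3)*(E (n+1) (k+2)) + (6*(k+1)+9)*(E (n+1) (k+1)) := Nat.le_add_left _ _
      · have hreg : 6*k + 12 ≤ 4*n := by omega
        have hk2n : k + 1 ≤ 2*n := by omega
        have hk2n' : k ≤ 2*n := by omega
        have ih1 : 4*n*(E n (k+1)) ≤ (k+3)*(E n (k+2)) + (6*k+15)*(E n (k+1)) := by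
          have h := ih (k+1)
          calc 4*n*(E n (k+1)) ≤ (k+1+2)*(E n (k+1+1)) + (6*(k+1)+9)*(E n (k+1)) := h
            _ = (k+3)*(E n (k+2)) + (6*k+15)*(E n (k+1)) := by ring_nf
        have ih2 := ih k
        rw [e1, e2]
        zify [hk2n, hk2n'] at ih1 ih2 ⊢
        have hN : 0 ≤ (n:ℤ) := Int.ofNat_nonneg n
        have hK : 0 ≤ (k:ℤ) := Int.ofNat_nonneg k
        have hA : 0 ≤ (E n k : ℤ) := Int.ofNat_nonneg _
        have hB : 0 ≤ (E n (k+1) : ℤ) := Int.ofNat_nonneg _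
        have hC : 0 ≤ (E n (k+2) : ℤ) := Int.ofNat_nonneg _
        have hregz : 6*(k:ℤ) + 12 ≤ 4*(n:ℤ) := by exact_mod_cast hreg
        set N := (n : ℤ) with hNdef
        set K := (k : ℤ) with hKdef
        set a := (E n k : ℤ) with hadef
        set b := (E n (k+1) : ℤ) with hbdef
        set c := (E n (k+2) : ℤ) with hcdef
        have s1 : 0 ≤ (K+2)*b - (4*N-6*K-9)*a := by nlinarith [ih2]
        have s2 : 0 ≤ (K+3)*c + (6*K+15)*b - 4*N*b := by nlinarith [ih1]
        have hQ : (0:ℤ) ≤ (4*N-6*K-11)*(2*N-K) :=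
          mul_nonneg (by linarith) (by linarith)
        have hphi := phi_nonneg N K hN hK hregz
        have ht9 : (0:ℤ) < 4*N-6*K-9 := by linarith
        have t1 : 0 ≤ (K+3)*(4*N-6*K-9) * ((K+3)*c + (6*K+15)*b - 4*N*b) :=
          mul_nonneg (mul_nonneg (by linarith) (by linarith)) s2
        have t2 : 0 ≤ ((4*N-6*K-11)*(2*N-K)) * ((K+2)*b - (4*N-6*K-9)*a) :=
          mul_nonneg hQ s1
        have t3 : 0 ≤ (24*N^2 - 150*N + 234 + 260*K - 80*N*K + 70*K^2)*b :=
          mul_nonneg hphi hB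
        have knn : 0 ≤ (4*N-6*K-9) *
            ((K+3)*((K+3)*c + (2*N-(K+1))*b) + (6*K+15)*((K+2)*b + (2*N-K)*a)
              - 4*(N+1)*((K+2)*b + (2*N-K)*a)) := by
          have key : (4*N-6*K-9) *
              ((K+3)*((K+3)*c + (2*N-(K+1))*b) + (6*K+15)*((K+2)*b + (2*N-K)*a)
                - 4*(N+1)*((K+2)*b + (2*N-K)*a))
              = (K+3)*(4*N-6*K-9) * ((K+3)*c + (6*K+15)*b - 4*N*b)
                + ((4*N-6*K-11)*(2*N-K)) * ((K+2)*b - (4*N-6*K-9)*a)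
                + (24*N^2 - 150*N + 234 + 260*K - 80*N*K + 70*K^2)*b := by ring
          rw [key]
          linarith [t1, t2, t3]
        have final := nonneg_of_mul_nonneg_right knn ht9
        linarith [final]

lemma E_mono {n k : ℕ} (h : 7*k + 11 ≤ 4*n) : E n k ≤ E n (k+1) := by
  have h1 := inv_lemma n k
  have g1 : (k+2) ≤ 4*n - (6*k+9) := by omega
  have g2 : (4*n - (6*k+9)) * E n k ≤ (k+2) * E n (k+1) := by
    have he : (4*n - (6*k+9)) * E n k + (6*k+9) * E n k = 4*n * E n k := by
      rw [← Nat.add_mul]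
      congr 1
      omega
    omega
  have g3 : (k+2) * E n k ≤ (4*n - (6*k+9)) * E n k := Nat.mul_le_mul_right _ g1
  exact Nat.le_of_mul_le_mul_left (le_trans g3 g2) (by omega : 0 < k+2)

example : E 2 0 ≤ E 2 1 ∧ E 4 1 ≤ E 4 2 ∧ E 6 2 ≤ E 6 3 := by decide

end StirAux

/-- The descent counts of Stirling permutations are weakly increasing up to the middle:
`|Q_{n,0}| ≤ |Q_{n,1}| ≤ ⋯ ≤ |Q_{n,⌊n/2⌋}|`. -/
theorem stirling_descents_increasing (n : ℕ) (hn : 1 ≤ n) (k : ℕ) (hk : k + 1 ≤ n / 2) :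
    (Qset n k).ncard ≤ (Qset n (k + 1)).ncard := by
  rw [StirAux.card_E, StirAux.card_E]
  have h2k : 2*(k+1) ≤ n := by omega
  by_cases h : 7*k + 11 ≤ 4*n
  · exact StirAux.E_mono h
  · have hsmall : (n = 2 ∧ k = 0) ∨ (n = 4 ∧ k = 1) ∨ (n = 6 ∧ k = 2) := by omega
    rcases hsmall with ⟨rfl, rfl⟩ | ⟨rfl, rfl⟩ | ⟨rfl, rfl⟩ <;> decide
end
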